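/- Let μ > 0 and let r ∈ C¹((0,∞)²) be positive with R₀ a^μ v^σ ≤ r(a,v) ≤ R₁ a^μ v^σ for some R₀, R₁ > 0 and σ ∈ ℝ. For ε > 0 and (A,V) ∈ (0,∞)², let x^ε_{A,V} : [0,∞) → (0,∞) be the solution of the ODE ∂_t x^ε_{A,V}(t) = (1/ε) r(x^ε_{A,V}(t), V)(c₀ V^{2/3} − x^ε_{A,V}(t)) with x^ε_{A,V}(0) = A, where c₀ := (36π)^{1/3}. Then for every fixed (A,V) ∈ (0,∞)² and every t > 0, lim_{ε→0} x^ε_{A,V}(t) = c₀ V^{2/3}; moreover, the convergence is uniform on compact subsets 𝐾 ⊂ (0,∞)³ of the variables (A,V,t). -/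

import Mathlib

/-!
A characteristic starting at `A` never falls below `m = min A (c₀ V^(2/3))`: at any level in
`(0, m)` the right-hand side is positive. Hence the relaxation rate `r(x, V)/ε` is at least
`ρ/ε` with `ρ = R₀ m^μ V^σ`, so `(x - c₀ V^(2/3))² e^(2ρt/ε)` is nonincreasing and
`|x(t) - c₀ V^(2/3)| ≤ |A - c₀ V^(2/3)| e^(-ρt/ε)`. Both the prefactor and `ρ t` are continuous
in `(A, V, t)` and `ρ t > 0`, so on a compact subset of `(0,∞)³` the bound is uniform.
-/

open MeasureTheory Real Set Filter Topology
open scoped ENNReal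

noncomputable section

/-- `c₀ = (36π)^(1/3)`, the isoperimetric constant relating area and volume of a ball. -/
def c0 : ℝ := (36 * Real.pi) ^ ((1 : ℝ) / 3)

/-- The open quadrant `(0,∞)²` of pairs `(a,v)` (surface area, volume). -/
def Quad : Set (ℝ × ℝ) := {p | 0 < p.1 ∧ 0 < p.2}

/-- The isoperimetric region `{(a,v) : v > 0, a ≥ c₀ v^(2/3)}`. -/
def IsoRegion : Set (ℝ × ℝ) := {p | 0 < p.2 ∧ c0 * p.2 ^ ((2 : ℝ) / 3) ≤ p.1}

/-- A nonnegative (Radon) measure on `(0,∞)²` supported in `{a ≥ c₀ v^(2/3)}`: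
it gives zero mass to the complement of the isoperimetric region. -/
def IsIsoMeasure (m : Measure (ℝ × ℝ)) : Prop := m IsoRegionᶜ = 0

/-- `C₀((0,∞)²)`: continuous functions vanishing at infinity of the open quadrant
(extended by zero outside the quadrant). -/
def IsC0Quad (φ : ℝ × ℝ → ℝ) : Prop :=
  Continuous φ ∧ (∀ p, p ∉ Quad → φ p = 0) ∧
    ∀ δ > 0, ∃ Kc : Set (ℝ × ℝ), IsCompact Kc ∧ Kc ⊆ Quad ∧ ∀ p ∉ Kc, |φ p| ≤ δ

/-- `C_c((0,∞)²)`: continuous functions with compact support contained in the quadrant. -/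
def IsCcQuad (φ : ℝ × ℝ → ℝ) : Prop :=
  Continuous φ ∧ HasCompactSupport φ ∧ tsupport φ ⊆ Quad

/-- `C₀((0,∞))`: continuous functions on `(0,∞)` vanishing at infinity (extended by zero). -/
def IsC0Pos (φ : ℝ → ℝ) : Prop :=
  Continuous φ ∧ (∀ v, v ∉ Ioi (0 : ℝ) → φ v = 0) ∧
    ∀ δ > 0, ∃ Kc : Set ℝ, IsCompact Kc ∧ Kc ⊆ Ioi (0 : ℝ) ∧ ∀ v ∉ Kc, |φ v| ≤ δ

/-- `C_c((0,∞))`: continuous functions with compact support contained in `(0,∞)`. -/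
def IsCcPos (φ : ℝ → ℝ) : Prop :=
  Continuous φ ∧ HasCompactSupport φ ∧ tsupport φ ⊆ Ioi (0 : ℝ)

/-- Partial derivative in the area variable `a`. -/
def da (φ : ℝ × ℝ → ℝ) (p : ℝ × ℝ) : ℝ := deriv (fun a => φ (a, p.2)) p.1

/-- Time-dependent test functions `φ ∈ C¹_c([0,∞); C¹_c((0,∞)²))`. -/
def IsTestFun (ψ : ℝ × (ℝ × ℝ) → ℝ) : Prop :=
  ContDiff ℝ 1 ψ ∧ HasCompactSupport ψ ∧ ∀ q : ℝ × (ℝ × ℝ), q.2 ∉ Quad → ψ q = 0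

/-- The assumptions on the coagulation kernel `K`: continuity, symmetry, and the
two-sided power law bounds with constants `K₀ ≥ K₁ > 0` and exponents
`al > 0`, `be ∈ (0,1)`, `be - al ∈ (0,1)`. -/
structure IsCoagKernel (K : ℝ × ℝ → ℝ × ℝ → ℝ) (K₀ K₁ al be : ℝ) : Prop where
  cont : ContinuousOn (fun q : (ℝ × ℝ) × (ℝ × ℝ) => K q.1 q.2) (Quad ×ˢ Quad)
  symm : ∀ η η', K η η' = K η' η
  K1_pos : 0 < K₁
  K1_le_K0 : K₁ ≤ K₀
  al_pos : 0 < al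
  be_mem : be ∈ Ioo (0 : ℝ) 1
  be_sub_al_mem : be - al ∈ Ioo (0 : ℝ) 1
  lower : ∀ η ∈ Quad, ∀ η' ∈ Quad,
    K₁ * (η.2 ^ (-al) * η'.2 ^ be + η'.2 ^ (-al) * η.2 ^ be) ≤ K η η'
  upper : ∀ η ∈ Quad, ∀ η' ∈ Quad,
    K η η' ≤ K₀ * (η.2 ^ (-al) * η'.2 ^ be + η'.2 ^ (-al) * η.2 ^ be)

/-- The assumptions on an admissible fusion kernel `r`: positivity, `C¹` regularity,
two-sided power law bounds `R₀ a^mu v^sg ≤ r ≤ R₁ a^mu v^sg`, and the structural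
differential inequalities on the isoperimetric region. -/
structure IsFusionKernel (r : ℝ × ℝ → ℝ) (R₀ R₁ mu sg B : ℝ) : Prop where
  smooth : ContDiffOn ℝ 1 r Quad
  pos : ∀ η ∈ Quad, 0 < r η
  R0_pos : 0 < R₀
  R1_pos : 0 < R₁
  B_pos : 0 < B
  lower : ∀ η ∈ Quad, R₀ * η.1 ^ mu * η.2 ^ sg ≤ r η
  upper : ∀ η ∈ Quad, r η ≤ R₁ * η.1 ^ mu * η.2 ^ sg
  cond_pos : 0 < mu → ∀ η ∈ IsoRegion, 0 ≤ da r η - mu * η.1⁻¹ * r η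
  cond_nonpos : mu ≤ 0 → ∀ η ∈ IsoRegion,
    0 ≤ da r η * (η.1 - c0 * η.2 ^ ((2 : ℝ) / 3)) + r η
  cond_upper : ∀ η ∈ IsoRegion, da r η ≤ B * η.1⁻¹ * r η

/-- The weak identity at time `t` against the test function `ψ`, for the
fusion–coagulation equation with fusion coefficient `c` (the `Λ`-fusion problem
corresponds to `c = Λ⁻¹`). -/
def WeakIdentity (K : ℝ × ℝ → ℝ × ℝ → ℝ) (r : ℝ × ℝ → ℝ) (c : ℝ)
    (fin : Measure (ℝ × ℝ)) (f : ℝ → Measure (ℝ × ℝ))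
    (ψ : ℝ × (ℝ × ℝ) → ℝ) (t : ℝ) : Prop :=
  (∫ η, ψ (t, η) ∂(f t)) - (∫ η, ψ (0, η) ∂fin)
      - ∫ s in (0 : ℝ)..t, ∫ η, deriv (fun u => ψ (u, η)) s ∂(f s)
    = (∫ s in (0 : ℝ)..t, (1 / 2) *
        ∫ η, ∫ η', K η η' * (ψ (s, η + η') - ψ (s, η) - ψ (s, η')) ∂(f s) ∂(f s))
      + c * ∫ s in (0 : ℝ)..t,
          ∫ η, r η * (c0 * η.2 ^ ((2 : ℝ) / 3) - η.1) * da (fun p => ψ (s, p)) η ∂(f s)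

/-- A weak solution of the fusion–coagulation problem with fusion coefficient `c`
(power-law exponents `al`, `be` of the coagulation kernel enter the a priori moment
bound), initial datum `fin`: a weak-* continuous family of measures supported in the
isoperimetric region, with locally uniformly bounded `(v^(-al) + v^be)`-moments,
satisfying the weak identity for all test functions and times. -/
def IsWeakSolution (K : ℝ × ℝ → ℝ × ℝ → ℝ) (r : ℝ × ℝ → ℝ) (c al be : ℝ)
    (fin : Measure (ℝ × ℝ)) (f : ℝ → Measure (ℝ × ℝ)) : Prop :=
  (∀ t, 0 ≤ t → IsIsoMeasure (f t)) ∧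
  (∀ φ, IsC0Quad φ → ContinuousOn (fun t => ∫ η, φ η ∂(f t)) (Ici (0 : ℝ))) ∧
  (∀ T > (0 : ℝ), ∃ C : ℝ≥0∞, C ≠ ⊤ ∧ ∀ t ∈ Icc (0 : ℝ) T,
      (∫⁻ η, ENNReal.ofReal (η.2 ^ (-al) + η.2 ^ be) ∂(f t)) ≤ C) ∧
  (∀ ψ, IsTestFun ψ → ∀ t, 0 ≤ t → WeakIdentity K r c fin f ψ t)

/-- The regularized fusion kernel `r̄_ε(a,v) = r(a,v)/(1 + ε^(2μ+2) a^μ)`. -/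
def rbarFn (r : ℝ × ℝ → ℝ) (mu ε : ℝ) (η : ℝ × ℝ) : ℝ :=
  r η / (1 + ε ^ (2 * mu + 2) * η.1 ^ mu)

end

theorem le_of_hasDerivAt_pos_of_mem_Ioo {X X' : ℝ → ℝ} {a m : ℝ} (ham : a < m)
    (hX : ∀ t ≥ 0, HasDerivAt X (X' t) t) (h0 : m ≤ X 0)
    (hpos : ∀ t ≥ 0, X t ∈ Ioo a m → 0 < X' t) {t : ℝ} (ht : 0 ≤ t) : m ≤ X t := by
  by_contra! hlt
  -- fence at a level `m' < m`, where the derivative is strictly positive rather than merely `≥ 0`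
  obtain ⟨m', hm'_gt, hm'_lt⟩ := exists_between (max_lt ham hlt)
  have hfence : ∀ ⦃s⦄, s ∈ Icc 0 t → m' ≤ X s :=
    image_le_of_deriv_right_lt_deriv_boundary' continuousOn_const
      (fun _ _ => hasDerivWithinAt_const _ _ m') (hm'_lt.le.trans h0)
      (fun s hs => (hX s hs.1).continuousAt.continuousWithinAt)
      (fun s hs => (hX s hs.1).hasDerivWithinAt)
      (fun s hs hXs => hpos s hs.1 ⟨hXs ▸ (le_max_left a _).trans_lt hm'_gt, hXs ▸ hm'_lt⟩)
  exact (hfence ⟨ht, le_rfl⟩).not_gt ((le_max_right a _).trans_lt hm'_gt)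

theorem abs_sub_le_mul_exp_of_hasDerivAt {X k : ℝ → ℝ} {L ρ : ℝ}
    (hX : ∀ t ≥ 0, HasDerivAt X (k t * (L - X t)) t) (hk : ∀ t ≥ 0, ρ ≤ k t)
    {t : ℝ} (ht : 0 ≤ t) : |X t - L| ≤ |X 0 - L| * exp (-(ρ * t)) := by
  set g : ℝ → ℝ := fun s => (X s - L) ^ 2 * exp (2 * ρ * s)
  have hg : ∀ s ≥ 0, HasDerivAt g
      (-(2 * (k s - ρ) * (X s - L) ^ 2 * exp (2 * ρ * s))) s := by
    intro s hs
    have hsq := ((hX s hs).sub_const L).fun_pow 2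
    have hexp := ((hasDerivAt_id s).const_mul (2 * ρ)).exp
    exact (hsq.mul hexp).congr_deriv (by simp only [id]; ring)
  have hanti : AntitoneOn g (Ici 0) := by
    refine antitoneOn_of_hasDerivWithinAt_nonpos (convex_Ici 0)
      (fun s hs => (hg s hs).continuousAt.continuousWithinAt)
      (fun s hs => (hg s (interior_subset hs)).hasDerivWithinAt) fun s hs => ?_
    have hks := sub_nonneg.2 (hk s (interior_subset hs))
    rw [neg_nonpos]
    positivity
  have hgt : g t ≤ g 0 := hanti self_mem_Ici ht ht
  refine abs_le_of_sq_le_sq ?_ (by positivity)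
  calc (X t - L) ^ 2 = g t * exp (-(2 * ρ * t)) := by
        simp only [g, mul_assoc, ← exp_add, add_neg_cancel, exp_zero, mul_one]
    _ ≤ g 0 * exp (-(2 * ρ * t)) := by gcongr
    _ = (|X 0 - L| * exp (-(ρ * t))) ^ 2 := by
        simp only [g, mul_zero, exp_zero, mul_one, mul_pow, sq_abs, ← exp_nat_mul]
        congr 2
        push_cast
        ring

theorem tendstoUniformlyOn_nhdsGT_zero_of_abs_sub_le_mul_exp {α : Type*} [TopologicalSpace α]
    {K : Set α} (hK : IsCompact K) {F : ℝ → α → ℝ} {G C c : α → ℝ}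
    (hC : ContinuousOn C K) (hc : ContinuousOn c K) (hc_pos : ∀ q ∈ K, 0 < c q)
    (hF : ∀ ε > 0, ∀ q ∈ K, |F ε q - G q| ≤ C q * exp (-(c q / ε))) :
    TendstoUniformlyOn F G (𝓝[>] 0) K := by
  obtain ⟨M, hM⟩ := hK.exists_bound_of_continuousOn hC
  obtain ⟨b, hb, hb_le⟩ := hK.exists_forall_le' hc hc_pos
  have hlim : Tendsto (fun ε => max M 0 * exp (-(b / ε))) (𝓝[>] 0) (𝓝 0) := by
    have hdiv : Tendsto (fun ε => b / ε) (𝓝[>] 0) atTop := by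
      simpa only [div_eq_mul_inv] using tendsto_inv_nhdsGT_zero.const_mul_atTop hb
    simpa using (tendsto_exp_atBot.comp (tendsto_neg_atTop_atBot.comp hdiv)).const_mul (max M 0)
  rw [Metric.tendstoUniformlyOn_iff]
  intro δ hδ
  filter_upwards [hlim.eventually_lt_const hδ, self_mem_nhdsWithin] with ε hεδ hε q hq
  have hCM : C q ≤ max M 0 := ((le_abs_self _).trans (hM q hq)).trans (le_max_left _ _)
  rw [dist_comm, Real.dist_eq]
  calc |F ε q - G q| ≤ C q * exp (-(c q / ε)) := hF ε hε q hq
    _ ≤ max M 0 * exp (-(b / ε)) := by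
      have hε_pos : (0 : ℝ) < ε := hε
      gcongr
      exact hb_le q hq
    _ < δ := hεδ

lemma c0_pos : 0 < c0 := rpow_pos_of_pos (by positivity) _

theorem abs_sub_le_mul_exp_of_fusion_characteristic {r : ℝ × ℝ → ℝ} {R₀ mu sg ε A V L : ℝ}
    (hR0 : 0 < R₀) (hmu : 0 ≤ mu) (hr_lower : ∀ η ∈ Quad, R₀ * η.1 ^ mu * η.2 ^ sg ≤ r η)
    (hε : 0 < ε) (hA : 0 < A) (hV : 0 < V) (hL : 0 < L) {X : ℝ → ℝ} (hX0 : X 0 = A)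
    (hX : ∀ t ≥ 0, HasDerivAt X (ε⁻¹ * r (X t, V) * (L - X t)) t) {t : ℝ} (ht : 0 ≤ t) :
    |X t - L| ≤ |A - L| * exp (-(R₀ * min A L ^ mu * V ^ sg * t / ε)) := by
  have hr_pos : ∀ y > 0, 0 < r (y, V) := fun y hy =>
    (by positivity : 0 < R₀ * y ^ mu * V ^ sg).trans_le (hr_lower (y, V) ⟨hy, hV⟩)
  have hmin_le : ∀ s ≥ 0, min A L ≤ X s := fun s hs =>
    le_of_hasDerivAt_pos_of_mem_Ioo (lt_min hA hL) hX (hX0 ▸ min_le_left A L)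
      (fun u _ hXu => mul_pos (mul_pos (inv_pos.2 hε) (hr_pos _ hXu.1))
        (sub_pos.2 (hXu.2.trans_le (min_le_right A L)))) hs
  have hrate : ∀ s ≥ 0, ε⁻¹ * (R₀ * min A L ^ mu * V ^ sg) ≤ ε⁻¹ * r (X s, V) := by
    intro s hs
    have hX_pos : 0 < X s := (lt_min hA hL).trans_le (hmin_le s hs)
    grw [← hr_lower (X s, V) ⟨hX_pos, hV⟩, hmin_le s hs]
  have hdecay := abs_sub_le_mul_exp_of_hasDerivAt (k := fun s => ε⁻¹ * r (X s, V)) hX hrate ht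
  rw [hX0] at hdecay
  convert hdecay using 3
  field_simp

theorem fusion_characteristics_relax_to_sphere_general
    (mu sg R₀ : ℝ) (hmu : 0 < mu) (hR0 : 0 < R₀)
    (r : ℝ × ℝ → ℝ)
    (hr_lower : ∀ η ∈ Quad, R₀ * η.1 ^ mu * η.2 ^ sg ≤ r η)
    -- x ε (A,V) is the solution of ∂_t x = ε⁻¹ r(x,V)(c₀V^{2/3} − x), x(0) = A
    (x : ℝ → ℝ × ℝ → ℝ → ℝ)
    (hx0 : ∀ ε > (0 : ℝ), ∀ p ∈ Quad, x ε p 0 = p.1)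
    (hode : ∀ ε > (0 : ℝ), ∀ p ∈ Quad, ∀ t ≥ (0 : ℝ),
      HasDerivAt (x ε p)
        (ε⁻¹ * r (x ε p t, p.2) * (c0 * p.2 ^ ((2 : ℝ) / 3) - x ε p t)) t) :
    -- pointwise convergence for fixed (A,V) and t > 0
    (∀ p ∈ Quad, ∀ t > (0 : ℝ),
      Tendsto (fun ε => x ε p t) (𝓝[>] (0 : ℝ)) (𝓝 (c0 * p.2 ^ ((2 : ℝ) / 3)))) ∧
    -- uniform convergence on compact subsets of (0,∞)³ in the variables (A,V,t)
    (∀ Kc : Set ((ℝ × ℝ) × ℝ), IsCompact Kc → Kc ⊆ Quad ×ˢ Ioi (0 : ℝ) →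
      TendstoUniformlyOn (fun ε q => x ε q.1 q.2)
        (fun q => c0 * q.1.2 ^ ((2 : ℝ) / 3)) (𝓝[>] (0 : ℝ)) Kc) := by
  have huniform : ∀ Kc : Set ((ℝ × ℝ) × ℝ), IsCompact Kc → Kc ⊆ Quad ×ˢ Ioi (0 : ℝ) →
      TendstoUniformlyOn (fun ε q => x ε q.1 q.2)
        (fun q => c0 * q.1.2 ^ ((2 : ℝ) / 3)) (𝓝[>] (0 : ℝ)) Kc := by
    intro Kc hKc hsub
    have hVpow : ∀ e : ℝ, ContinuousOn (fun q : (ℝ × ℝ) × ℝ => q.1.2 ^ e) Kc := fun e =>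
      continuous_fst.snd.continuousOn.rpow_const fun q hq => Or.inl (hsub hq).1.2.ne'
    refine tendstoUniformlyOn_nhdsGT_zero_of_abs_sub_le_mul_exp hKc
      (C := fun q => |q.1.1 - c0 * q.1.2 ^ ((2 : ℝ) / 3)|)
      (c := fun q => R₀ * min q.1.1 (c0 * q.1.2 ^ ((2 : ℝ) / 3)) ^ mu * q.1.2 ^ sg * q.2)
      (by fun_prop) (((continuousOn_const.mul ((by fun_prop : ContinuousOn _ Kc).rpow_const
        fun _ _ => Or.inr hmu.le)).mul (hVpow sg)).mul continuous_snd.continuousOn) ?_ ?_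
    · intro q hq
      obtain ⟨⟨hA, hV⟩, ht⟩ := hsub hq
      have hc0 := c0_pos
      simp only [mem_Ioi] at ht
      positivity
    · intro ε hε q hq
      obtain ⟨hp, ht⟩ := hsub hq
      exact abs_sub_le_mul_exp_of_fusion_characteristic hR0 hmu.le hr_lower hε hp.1 hp.2
        (mul_pos c0_pos (rpow_pos_of_pos hp.2 _)) (hx0 ε hε q.1 hp) (hode ε hε q.1 hp)
        (le_of_lt ht)
  refine ⟨fun p hp t ht => ?_, huniform⟩
  simpa using (huniform {(p, t)} isCompact_singleton (singleton_subset_iff.2 ⟨hp, ht⟩)).tendsto_at rfl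

/-- the characteristics of the fast-fusion transport term converge to the
isoperimetric line as ε → 0, pointwise and uniformly on compact subsets of (0,∞)³. -/
theorem fusion_characteristics_relax_to_sphere
    (mu sg R₀ R₁ : ℝ) (hmu : 0 < mu) (hR0 : 0 < R₀) (hR1 : 0 < R₁)
    (r : ℝ × ℝ → ℝ)
    (hr_smooth : ContDiffOn ℝ 1 r Quad)
    (hr_pos : ∀ η ∈ Quad, 0 < r η)
    (hr_lower : ∀ η ∈ Quad, R₀ * η.1 ^ mu * η.2 ^ sg ≤ r η)
    (hr_upper : ∀ η ∈ Quad, r η ≤ R₁ * η.1 ^ mu * η.2 ^ sg)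
    -- x ε (A,V) is the solution of ∂_t x = ε⁻¹ r(x,V)(c₀V^{2/3} − x), x(0) = A
    (x : ℝ → ℝ × ℝ → ℝ → ℝ)
    (hx0 : ∀ ε > (0 : ℝ), ∀ p ∈ Quad, x ε p 0 = p.1)
    (hx_pos : ∀ ε > (0 : ℝ), ∀ p ∈ Quad, ∀ t ≥ (0 : ℝ), 0 < x ε p t)
    (hode : ∀ ε > (0 : ℝ), ∀ p ∈ Quad, ∀ t ≥ (0 : ℝ),
      HasDerivAt (x ε p)
        (ε⁻¹ * r (x ε p t, p.2) * (c0 * p.2 ^ ((2 : ℝ) / 3) - x ε p t)) t) :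
    -- pointwise convergence for fixed (A,V) and t > 0
    (∀ p ∈ Quad, ∀ t > (0 : ℝ),
      Tendsto (fun ε => x ε p t) (𝓝[>] (0 : ℝ)) (𝓝 (c0 * p.2 ^ ((2 : ℝ) / 3)))) ∧
    -- uniform convergence on compact subsets of (0,∞)³ in the variables (A,V,t)
    (∀ Kc : Set ((ℝ × ℝ) × ℝ), IsCompact Kc → Kc ⊆ Quad ×ˢ Ioi (0 : ℝ) →
      TendstoUniformlyOn (fun ε q => x ε q.1 q.2)
        (fun q => c0 * q.1.2 ^ ((2 : ℝ) / 3)) (𝓝[>] (0 : ℝ)) Kc) :=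
  fusion_characteristics_relax_to_sphere_general mu sg R₀ hmu hR0 r hr_lower x hx0 hode
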